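/- For probability vectors p, q on a finite index set arising as measurement statistics of pure states ψ, φ (pᵢ = |⟨eᵢ,ψ⟩|², qᵢ = |⟨eᵢ,φ⟩|² for an orthonormal basis {eᵢ}), the total variation distance satisfies ∑ᵢ |pᵢ − qᵢ| ≤ 2·√(1 − |⟨ψ,φ⟩|²). -/

import Mathlib

/-!
Replacing `ψ` by `u • ψ` for a phase `|u| = 1` leaves the outcome distribution unchanged and
makes `⟪ψ, φ⟫` equal to `t = |⟪ψ, φ⟫|`. Then `|p i - q i| = | |a|² - |d|² | ≤ |a + d| |a - d|` for the
amplitudes `a, d` of `ψ, φ`, and Cauchy–Schwarz with Parseval bounds the sum by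
`‖ψ + φ‖ ‖ψ - φ‖ = √((2 + 2t)(2 - 2t)) = 2 √(1 - t²)`.
-/

open scoped InnerProductSpace

theorem abs_norm_sq_sub_norm_sq_le {F : Type*} [NormedAddCommGroup F] [InnerProductSpace ℝ F]
    (x y : F) : |‖x‖ ^ 2 - ‖y‖ ^ 2| ≤ ‖x + y‖ * ‖x - y‖ := by
  have h : ⟪x + y, x - y⟫_ℝ = ‖x‖ ^ 2 - ‖y‖ ^ 2 := by
    rw [inner_add_left, inner_sub_right, inner_sub_right, real_inner_comm x y,
      real_inner_self_eq_norm_sq, real_inner_self_eq_norm_sq]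
    ring
  exact h ▸ abs_real_inner_le_norm _ _

section InnerProductSpace

variable {𝕜 E : Type*} [RCLike 𝕜] [NormedAddCommGroup E] [InnerProductSpace 𝕜 E]

theorem norm_add_mul_norm_sub_of_norm_eq_one {x y : E} (hx : ‖x‖ = 1) (hy : ‖y‖ = 1) :
    ‖x + y‖ * ‖x - y‖ = 2 * √(1 - RCLike.re ⟪x, y⟫_𝕜 ^ 2) := by
  have hadd : ‖x + y‖ ^ 2 = 2 * (1 + RCLike.re ⟪x, y⟫_𝕜) := by
    rw [norm_add_sq (𝕜 := 𝕜), hx, hy]; ring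
  have hsub : ‖x - y‖ ^ 2 = 2 * (1 - RCLike.re ⟪x, y⟫_𝕜) := by
    rw [norm_sub_sq (𝕜 := 𝕜), hx, hy]; ring
  rw [← Real.sqrt_sq (norm_nonneg (x + y)), ← Real.sqrt_sq (norm_nonneg (x - y)),
    ← Real.sqrt_mul (sq_nonneg _), hadd, hsub,
    show 2 * (1 + RCLike.re ⟪x, y⟫_𝕜) * (2 * (1 - RCLike.re ⟪x, y⟫_𝕜))
      = 2 ^ 2 * (1 - RCLike.re ⟪x, y⟫_𝕜 ^ 2) by ring,
    Real.sqrt_mul (sq_nonneg _), Real.sqrt_sq zero_le_two]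

theorem exists_norm_eq_one_re_inner_smul_eq_norm (x y : E) :
    ∃ u : 𝕜, ‖u‖ = 1 ∧ RCLike.re ⟪u • x, y⟫_𝕜 = ‖⟪x, y⟫_𝕜‖ := by
  by_cases hc : ⟪x, y⟫_𝕜 = 0
  · exact ⟨1, by simp, by simp [hc]⟩
  refine ⟨⟪x, y⟫_𝕜 / ‖⟪x, y⟫_𝕜‖, by simp [norm_ne_zero_iff.mpr hc], ?_⟩
  rw [inner_smul_left, map_div₀, RCLike.conj_ofReal, div_mul_eq_mul_div, RCLike.conj_mul,
    ← RCLike.ofReal_pow, ← RCLike.ofReal_div, RCLike.ofReal_re, sq,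
    mul_div_cancel_right₀ _ (norm_ne_zero_iff.mpr hc)]

end InnerProductSpace

namespace OrthonormalBasis

variable {𝕜 E ι : Type*} [RCLike 𝕜] [NormedAddCommGroup E] [InnerProductSpace 𝕜 E] [Fintype ι]

theorem sum_abs_sq_norm_inner_sub_le (b : OrthonormalBasis ι 𝕜 E) (x y : E) :
    ∑ i, |‖⟪b i, x⟫_𝕜‖ ^ 2 - ‖⟪b i, y⟫_𝕜‖ ^ 2| ≤ ‖x + y‖ * ‖x - y‖ := by
  calc ∑ i, |‖⟪b i, x⟫_𝕜‖ ^ 2 - ‖⟪b i, y⟫_𝕜‖ ^ 2|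
      ≤ ∑ i, ‖⟪b i, x + y⟫_𝕜‖ * ‖⟪b i, x - y⟫_𝕜‖ := by
        gcongr with i
        rw [inner_add_right, inner_sub_right]
        exact abs_norm_sq_sub_norm_sq_le _ _
    _ ≤ √(∑ i, ‖⟪b i, x + y⟫_𝕜‖ ^ 2) * √(∑ i, ‖⟪b i, x - y⟫_𝕜‖ ^ 2) :=
        Real.sum_mul_le_sqrt_mul_sqrt _ _ _
    _ = ‖x + y‖ * ‖x - y‖ := by
        simp only [sum_sq_norm_inner_right, Real.sqrt_sq (norm_nonneg _)]

end OrthonormalBasis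

theorem measurement_tv_bound_general {E : Type*} [NormedAddCommGroup E]
    [InnerProductSpace ℂ E] {ι : Type*} [Fintype ι]
    (b : OrthonormalBasis ι ℂ E) (ψ φ : E) (hψ : ‖ψ‖ = 1) (hφ : ‖φ‖ = 1)
    (p q : ι → ℝ)
    (hp : ∀ i, p i = ‖⟪b i, ψ⟫_ℂ‖ ^ 2)
    (hq : ∀ i, q i = ‖⟪b i, φ⟫_ℂ‖ ^ 2) :
    ∑ i, |p i - q i| ≤ 2 * Real.sqrt (1 - ‖⟪ψ, φ⟫_ℂ‖ ^ 2) := by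
  obtain ⟨u, hu, hre⟩ := exists_norm_eq_one_re_inner_smul_eq_norm (𝕜 := ℂ) ψ φ
  have hp' : ∀ i, p i = ‖⟪b i, u • ψ⟫_ℂ‖ ^ 2 := fun i ↦ by
    rw [hp, inner_smul_right, norm_mul, hu, one_mul]
  have huψ : ‖u • ψ‖ = 1 := by rw [norm_smul, hu, hψ, one_mul]
  calc ∑ i, |p i - q i| = ∑ i, |‖⟪b i, u • ψ⟫_ℂ‖ ^ 2 - ‖⟪b i, φ⟫_ℂ‖ ^ 2| := by
        simp only [hp', hq]
    _ ≤ ‖u • ψ + φ‖ * ‖u • ψ - φ‖ := b.sum_abs_sq_norm_inner_sub_le _ _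
    _ = 2 * √(1 - ‖⟪ψ, φ⟫_ℂ‖ ^ 2) := by
        rw [norm_add_mul_norm_sub_of_norm_eq_one (𝕜 := ℂ) huψ hφ, hre]

theorem measurement_tv_bound {E : Type*} [NormedAddCommGroup E]
    [InnerProductSpace ℂ E] [FiniteDimensional ℂ E] {ι : Type*} [Fintype ι]
    (b : OrthonormalBasis ι ℂ E) (ψ φ : E) (hψ : ‖ψ‖ = 1) (hφ : ‖φ‖ = 1)
    (p q : ι → ℝ)
    (hp : ∀ i, p i = ‖⟪b i, ψ⟫_ℂ‖ ^ 2)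
    (hq : ∀ i, q i = ‖⟪b i, φ⟫_ℂ‖ ^ 2) :
    ∑ i, |p i - q i| ≤ 2 * Real.sqrt (1 - ‖⟪ψ, φ⟫_ℂ‖ ^ 2) :=
  measurement_tv_bound_general b ψ φ hψ hφ p q hp hq
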